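/- Under the ring-of-routers placement condition, every pair of active routers is connected by a path in the grid that uses only active routers; in particular every active router and every boundary (pin) vertex of the grid is reachable from every component's access router. -/

import Mathlib

/-- An axis-aligned rectangle `[a,b] × [c,d]` of grid cells. -/
structure Rect where
  a : ℤ
  b : ℤ
  c : ℤ
  d : ℤ
  hab : a ≤ b
  hcd : c ≤ d

/-- The set of cells covered by a rectangle. -/
def Rect.Mem (R : Rect) (p : ℤ × ℤ) : Prop :=
  R.a ≤ p.1 ∧ p.1 ≤ R.b ∧ R.c ≤ p.2 ∧ p.2 ≤ R.d

/-- The one-cell-enlarged rectangle `[a-1,b+1] × [c-1,d+1]`. -/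
def Rect.EnlMem (R : Rect) (p : ℤ × ℤ) : Prop :=
  R.a - 1 ≤ p.1 ∧ p.1 ≤ R.b + 1 ∧ R.c - 1 ≤ p.2 ∧ p.2 ≤ R.d + 1

/-- The component's access router: the router immediately above-right of its
rectangle. -/
def Rect.access (R : Rect) : ℤ × ℤ := (R.b + 1, R.d + 1)

/-- The n×m grid of routers. -/
def Grid (n m : ℕ) : Set (ℤ × ℤ) :=
  {p | 0 ≤ p.1 ∧ p.1 < (n : ℤ) ∧ 0 ≤ p.2 ∧ p.2 < (m : ℤ)}

/-- The boundary (pin) vertices of the n×m grid. -/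
def GridBoundary (n m : ℕ) : Set (ℤ × ℤ) :=
  {p | p ∈ Grid n m ∧ (p.1 = 0 ∨ p.1 = (n : ℤ) - 1 ∨ p.2 = 0 ∨ p.2 = (m : ℤ) - 1)}

/-- Grid adjacency. -/
def adj (u v : ℤ × ℤ) : Prop := (u.1 - v.1).natAbs + (u.2 - v.2).natAbs = 1

/-- Reachability within a set `S` of active routers. -/
def ReachOn (S : Set (ℤ × ℤ)) (u v : ℤ × ℤ) : Prop :=
  Relation.ReflTransGen (fun x y => adj x y ∧ x ∈ S ∧ y ∈ S) u v

/-!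
Every active router can climb to the top row: if the vertex above it is covered by a
rectangle, the router sits on the bottom side of that rectangle's ring, and walking right
along the ring and then up its right side reaches the access router, strictly higher.
The ring condition keeps every rectangle off the grid's boundary, so the top row is
entirely active and connects all the climbs.
-/

def Active (n m : ℕ) (P : Finset Rect) : Set (ℤ × ℤ) :=
  {p | p ∈ Grid n m ∧ ∀ R ∈ P, ¬ R.Mem p}

def RingCondition (n m : ℕ) (P : Finset Rect) : Prop :=
  ∀ R ∈ P, (∀ p, R.EnlMem p → p ∈ Grid n m) ∧
    (∀ p, R.EnlMem p → ¬ R.Mem p → ∀ R' ∈ P, ¬ R'.Mem p)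

lemma adj_comm {u v : ℤ × ℤ} : adj u v ↔ adj v u := by
  unfold adj; omega

namespace ReachOn

variable {S : Set (ℤ × ℤ)}

lemma symm {u v : ℤ × ℤ} (h : ReachOn S u v) : ReachOn S v u :=
  (@Relation.ReflTransGen.stdSymm _ _ ⟨fun _ _ h ↦ ⟨adj_comm.1 h.1, h.2.2, h.2.1⟩⟩).symm _ _ h

lemma of_path (f : ℕ → ℤ × ℤ) (k : ℕ) (hadj : ∀ i < k, adj (f i) (f (i + 1)))
    (hS : ∀ i ≤ k, f i ∈ S) : ReachOn S (f 0) (f k) := by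
  induction k with
  | zero => exact .refl
  | succ k ih =>
    exact (ih (fun i hi ↦ hadj i (by omega)) (fun i hi ↦ hS i (by omega))).tail
      ⟨hadj k k.lt_succ_self, hS k (by omega), hS (k + 1) le_rfl⟩

lemma horizontal {x₁ x₂ y : ℤ} (hx : x₁ ≤ x₂)
    (hS : ∀ x, x₁ ≤ x → x ≤ x₂ → (x, y) ∈ S) : ReachOn S (x₁, y) (x₂, y) := by
  have h := of_path (S := S) (fun i ↦ (x₁ + i, y)) (x₂ - x₁).toNat
    (fun i _ ↦ by simp [adj]) (fun i hi ↦ hS _ (by omega) (by omega))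
  convert h using 2 <;> simp; omega

lemma vertical {x y₁ y₂ : ℤ} (hy : y₁ ≤ y₂)
    (hS : ∀ y, y₁ ≤ y → y ≤ y₂ → (x, y) ∈ S) : ReachOn S (x, y₁) (x, y₂) := by
  have h := of_path (S := S) (fun i ↦ (x, y₁ + i)) (y₂ - y₁).toNat
    (fun i _ ↦ by simp [adj]) (fun i hi ↦ hS _ (by omega) (by omega))
  convert h using 2 <;> simp; omega

lemma of_row_subset {a b y x₁ x₂ : ℤ} (hS : ∀ x, a ≤ x → x ≤ b → (x, y) ∈ S)
    (h₁ : a ≤ x₁ ∧ x₁ ≤ b) (h₂ : a ≤ x₂ ∧ x₂ ≤ b) : ReachOn S (x₁, y) (x₂, y) := by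
  rcases le_total x₁ x₂ with h | h
  · exact horizontal h fun x hx hx' ↦ hS x (by omega) (by omega)
  · exact (horizontal h fun x hx hx' ↦ hS x (by omega) (by omega)).symm

end ReachOn

lemma exists_reflTransGen_of_forall_exists_higher {α : Type*} {r : α → α → Prop}
    {S : Set α} (h : α → ℤ) (M : ℤ) (hle : ∀ p ∈ S, h p ≤ M)
    (hstep : ∀ p ∈ S, h p < M → ∃ q ∈ S, Relation.ReflTransGen r p q ∧ h p < h q) :
    ∀ p ∈ S, ∃ q ∈ S, Relation.ReflTransGen r p q ∧ h q = M := by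
  suffices ∀ k : ℕ, ∀ p ∈ S, M - h p ≤ k → ∃ q ∈ S, Relation.ReflTransGen r p q ∧ h q = M from
    fun p hp ↦ this _ p hp (Int.self_le_toNat _)
  intro k
  induction k with
  | zero => exact fun p hp hk ↦ ⟨p, hp, .refl, by have := hle p hp; push_cast at hk; omega⟩
  | succ k ih =>
    intro p hp hk
    rcases (hle p hp).lt_or_eq with hlt | heq
    · obtain ⟨q, hq, hpq, hh⟩ := hstep p hp hlt
      obtain ⟨s, hs, hqs, hsM⟩ := ih q hq (by push_cast at hk; omega)
      exact ⟨s, hs, hpq.trans hqs, hsM⟩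
    · exact ⟨p, hp, .refl, heq⟩

namespace RingCondition

variable {n m : ℕ} {P : Finset Rect} (hP : RingCondition n m P)
include hP

lemma mem_active {R : Rect} (hR : R ∈ P) {p : ℤ × ℤ} (hE : R.EnlMem p) (hM : ¬ R.Mem p) :
    p ∈ Active n m P :=
  ⟨(hP R hR).1 p hE, (hP R hR).2 p hE hM⟩

lemma access_mem_active {R : Rect} (hR : R ∈ P) : R.access ∈ Active n m P := by
  have := R.hab; have := R.hcd
  exact hP.mem_active hR (by simp only [Rect.EnlMem, Rect.access]; omega)
    (by simp only [Rect.Mem, Rect.access]; omega)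

lemma not_mem_of_mem_gridBoundary {q : ℤ × ℤ} (hq : q ∈ GridBoundary n m) {R : Rect}
    (hR : R ∈ P) : ¬ R.Mem q := by
  have := R.hab; have := R.hcd
  have hlow := (hP R hR).1 (R.a - 1, R.c - 1) ⟨le_rfl, by omega, le_rfl, by omega⟩
  have hhigh := (hP R hR).1 (R.b + 1, R.d + 1) ⟨by omega, le_rfl, by omega, le_rfl⟩
  obtain ⟨-, hside⟩ := hq
  simp only [Grid, Set.mem_ofPred_eq] at hlow hhigh
  simp only [Rect.Mem]
  omega

lemma gridBoundary_subset_active : GridBoundary n m ⊆ Active n m P :=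
  fun _ hq ↦ ⟨hq.1, fun _ hR ↦ hP.not_mem_of_mem_gridBoundary hq hR⟩

lemma reachOn_access_of_below {R : Rect} (hR : R ∈ P) {x : ℤ} (hx : R.a ≤ x ∧ x ≤ R.b) :
    ReachOn (Active n m P) (x, R.c - 1) R.access := by
  have := R.hab; have := R.hcd
  refine (ReachOn.horizontal (x₂ := R.b + 1) (by omega) fun x' _ _ ↦ ?_).trans
    (ReachOn.vertical (by omega) fun y _ _ ↦ ?_)
  · exact hP.mem_active hR ⟨by omega, by omega, by omega, by omega⟩
      (by simp only [Rect.Mem]; omega)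
  · exact hP.mem_active hR ⟨by omega, by omega, by omega, by omega⟩
      (by simp only [Rect.Mem]; omega)

lemma exists_reachOn_higher {p : ℤ × ℤ} (hp : p ∈ Active n m P) (hpm : p.2 < m - 1) :
    ∃ q ∈ Active n m P, ReachOn (Active n m P) p q ∧ p.2 < q.2 := by
  obtain ⟨⟨hx₀, hxn, hy₀, hym⟩, hfree⟩ := hp
  by_cases habove : ∀ R ∈ P, ¬ R.Mem (p.1, p.2 + 1)
  · have hq : (p.1, p.2 + 1) ∈ Active n m P := ⟨⟨hx₀, hxn, by omega, by omega⟩, habove⟩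
    exact ⟨_, hq, .single ⟨by simp [adj], ⟨⟨hx₀, hxn, hy₀, hym⟩, hfree⟩, hq⟩, by simp⟩
  push Not at habove
  obtain ⟨R, hR, hRa, hRb, hRc, hRd⟩ := habove
  have hpc : p.2 = R.c - 1 := by
    have := hfree R hR
    simp only [Rect.Mem] at this hRa hRb hRc hRd
    omega
  refine ⟨R.access, hP.access_mem_active hR, ?_, by simp [Rect.access]; omega⟩
  rw [show p = (p.1, R.c - 1) from Prod.ext rfl hpc]
  exact hP.reachOn_access_of_below hR ⟨hRa, hRb⟩

lemma exists_reachOn_top_row {p : ℤ × ℤ} (hp : p ∈ Active n m P) :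
    ∃ q ∈ Active n m P, ReachOn (Active n m P) p q ∧ q.2 = m - 1 :=
  exists_reflTransGen_of_forall_exists_higher Prod.snd (m - 1)
    (fun q hq ↦ by have := hq.1.2.2.2; omega)
    (fun _ hq hqm ↦ hP.exists_reachOn_higher hq hqm) p hp

lemma reachOn_of_top_row {x₁ x₂ : ℤ} (h₁ : (x₁, (m : ℤ) - 1) ∈ Grid n m)
    (h₂ : (x₂, (m : ℤ) - 1) ∈ Grid n m) :
    ReachOn (Active n m P) (x₁, m - 1) (x₂, m - 1) := by
  obtain ⟨hx₁, hx₁n, -, -⟩ := h₁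
  obtain ⟨hx₂, hx₂n, hm, -⟩ := h₂
  refine ReachOn.of_row_subset (a := 0) (b := n - 1) (fun x hx hx' ↦ ?_)
    ⟨hx₁, by omega⟩ ⟨hx₂, by omega⟩
  exact hP.gridBoundary_subset_active ⟨⟨hx, by omega, hm, by omega⟩, by simp⟩

lemma reachOn_active {u v : ℤ × ℤ} (hu : u ∈ Active n m P) (hv : v ∈ Active n m P) :
    ReachOn (Active n m P) u v := by
  obtain ⟨⟨x₁, y₁⟩, hq₁, hu₁, rfl⟩ := hP.exists_reachOn_top_row hu
  obtain ⟨⟨x₂, y₂⟩, hq₂, hv₂, rfl⟩ := hP.exists_reachOn_top_row hv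
  exact (hu₁.trans (hP.reachOn_of_top_row hq₁.1 hq₂.1)).trans hv₂.symm

end RingCondition

theorem ring_condition_full_reachability_general (n m : ℕ) (P : Finset Rect)
    (hring : ∀ R ∈ P,
      (∀ p, R.EnlMem p → p ∈ Grid n m) ∧
      (∀ p, R.EnlMem p → ¬ R.Mem p → ∀ R' ∈ P, ¬ R'.Mem p)) :
    (∀ u ∈ {p | p ∈ Grid n m ∧ ∀ R ∈ P, ¬ R.Mem p},
      ∀ v ∈ {p | p ∈ Grid n m ∧ ∀ R ∈ P, ¬ R.Mem p},
        ReachOn {p | p ∈ Grid n m ∧ ∀ R ∈ P, ¬ R.Mem p} u v) ∧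
    (∀ q ∈ GridBoundary n m, ∀ R' ∈ P, ¬ R'.Mem q) ∧
    (∀ R ∈ P, ∀ q ∈ GridBoundary n m,
      ReachOn {p | p ∈ Grid n m ∧ ∀ R' ∈ P, ¬ R'.Mem p} R.access q) := by
  have hP : RingCondition n m P := hring
  refine ⟨fun u hu v hv ↦ hP.reachOn_active hu hv,
    fun q hq R hR ↦ hP.not_mem_of_mem_gridBoundary hq hR, fun R hR q hq ↦ ?_⟩
  exact hP.reachOn_active (hP.access_mem_active hR) (hP.gridBoundary_subset_active hq)

/-- Under the ring-of-routers placement condition every pair of active routers is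
connected by a path through active routers; in particular every boundary (pin)
vertex is active and reachable from every component's access router. -/
theorem ring_condition_full_reachability (n m : ℕ) (P : Finset Rect)
    (hdisj : ∀ R ∈ P, ∀ R' ∈ P, R ≠ R' → ∀ p, ¬ (R.Mem p ∧ R'.Mem p))
    (hring : ∀ R ∈ P,
      (∀ p, R.EnlMem p → p ∈ Grid n m) ∧
      (∀ p, R.EnlMem p → ¬ R.Mem p → ∀ R' ∈ P, ¬ R'.Mem p)) :
    (∀ u ∈ {p | p ∈ Grid n m ∧ ∀ R ∈ P, ¬ R.Mem p},
      ∀ v ∈ {p | p ∈ Grid n m ∧ ∀ R ∈ P, ¬ R.Mem p},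
        ReachOn {p | p ∈ Grid n m ∧ ∀ R ∈ P, ¬ R.Mem p} u v) ∧
    (∀ q ∈ GridBoundary n m, ∀ R' ∈ P, ¬ R'.Mem q) ∧
    (∀ R ∈ P, ∀ q ∈ GridBoundary n m,
      ReachOn {p | p ∈ Grid n m ∧ ∀ R' ∈ P, ¬ R'.Mem p} R.access q) :=
  ring_condition_full_reachability_general n m P hring
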